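/- Let S be a finite semigroup and c : {(m,n) ∈ ℕ × ℕ | m < n} → S additive. Suppose X ⊆ ℕ is infinite with minimum y₀, all elements of X are such that c(y₀, x) = s for a fixed s ∈ S and all x ∈ X with x > y₀, and all c-values on pairs from X are R-equivalent to s. Then X \ {y₀} is c-homogeneous, with common colour the idempotent of the H-class of s. -/

import Mathlib

/-!
Let `e` be an idempotent of the (finite) subsemigroup generated by `s`. For `y₀ < l < m` in `X`,
additivity gives `s * a = c(y₀,l) * c(l,m) = c(y₀,m) = s` for `a = c(l,m)`, and `a = s * u`
(or `a = s`) since `a ≤_R s`, so `a = s * a * u`. Both identities pass from `s` to every product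
of copies of `s`, in particular to `e`: `e * a = e` and `a = e * a * v`. Then
`e * a = e * e * a * v = a`, so `a = e`.
-/

/-- Green's R-preorder. -/
def leR {S : Type*} [Semigroup S] (s t : S) : Prop := s = t ∨ ∃ a, s = t * a
/-- Green's L-preorder. -/
def leL {S : Type*} [Semigroup S] (s t : S) : Prop := s = t ∨ ∃ a, s = a * t
/-- Green's R-equivalence. -/
def eqR {S : Type*} [Semigroup S] (s t : S) : Prop := leR s t ∧ leR t s
/-- Green's H-equivalence. -/
def eqH {S : Type*} [Semigroup S] (s t : S) : Prop :=
  eqR s t ∧ (leL s t ∧ leL t s)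

theorem Subsemigroup.exists_idempotent_of_finite {M : Type*} [Semigroup M] [Finite M]
    (T : Subsemigroup M) (hT : (T : Set M).Nonempty) : ∃ e ∈ T, e * e = e := by
  let _ : TopologicalSpace M := ⊥
  have _ : DiscreteTopology M := ⟨rfl⟩
  exact exists_idempotent_in_compact_subsemigroup (fun _ => continuous_of_discreteTopology)
    (T : Set M) hT (Set.toFinite _).isCompact fun _ hx _ hy => T.mul_mem hx hy

section Green

variable {S : Type*} [Semigroup S]

theorem leL_of_mem_closure_singleton {s x : S} (hx : x ∈ Subsemigroup.closure {s}) :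
    leL x s := by
  induction hx using Subsemigroup.closure_induction with
  | mem x hx => exact Or.inl hx
  | mul x y _ _ _ hy =>
    rcases hy with rfl | ⟨b, rfl⟩
    · exact Or.inr ⟨x, rfl⟩
    · exact Or.inr ⟨x * b, (mul_assoc x b s).symm⟩

theorem mul_eq_self_and_exists_eq_mul_mul_of_mem_closure_singleton {s a x : S}
    (hsa : s * a = s) (has : leR a s) (hx : x ∈ Subsemigroup.closure {s}) :
    x * a = x ∧ ∃ v, a = x * a * v := by
  induction hx using Subsemigroup.closure_induction with
  | mem x hx =>
    rw [Set.mem_singleton_iff.1 hx, hsa]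
    refine ⟨rfl, ?_⟩
    rcases has with rfl | ⟨u, rfl⟩
    · exact ⟨a, hsa.symm⟩
    · exact ⟨u, rfl⟩
  | mul x y _ _ hx hy =>
    obtain ⟨hxa, v, hv⟩ := hx
    obtain ⟨hya, w, hw⟩ := hy
    refine ⟨by rw [mul_assoc, hya], w * v, ?_⟩
    calc a = x * (y * a * w) * v := by rw [← hw, ← hv]
      _ = x * y * a * (w * v) := by simp only [mul_assoc]

theorem eq_of_mul_eq_self_of_leR {s a e : S} (he : e ∈ Subsemigroup.closure {s})
    (hee : e * e = e) (hsa : s * a = s) (has : leR a s) : a = e := by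
  obtain ⟨hea, v, hv⟩ := mul_eq_self_and_exists_eq_mul_mul_of_mem_closure_singleton hsa has he
  calc a = e * a * v := hv
    _ = e * (e * a * v) := by simp only [← mul_assoc, hee]
    _ = e := by rw [← hv, hea]

end Green

theorem homogeneous_from_Rclass_general (S : Type*) [Semigroup S] [Fintype S]
    (c : ℕ → ℕ → S)
    (hadd : ∀ x y z : ℕ, x < y → y < z → c x z = c x y * c y z)
    (X : Set ℕ) (hX : X.Infinite) (y₀ : ℕ)
    (hmin : ∀ x ∈ X, y₀ ≤ x)
    (s : S) (hs : ∀ x ∈ X, y₀ < x → c y₀ x = s)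
    (hRs : ∀ x ∈ X, ∀ y ∈ X, x < y → eqR (c x y) s) :
    ∃ e : S, e * e = e ∧ eqH e s ∧
      ∀ x ∈ X \ {y₀}, ∀ y ∈ X \ {y₀}, x < y → c x y = e := by
  obtain ⟨e, he, hee⟩ := (Subsemigroup.closure {s}).exists_idempotent_of_finite
    ⟨s, Subsemigroup.subset_closure rfl⟩
  have habsorb : ∀ l ∈ X, ∀ m ∈ X, y₀ < l → l < m → s * c l m = s := fun l hl m hm hl₀ hlm => by
    rw [← hs l hl hl₀, ← hadd y₀ l m hl₀ hlm, hs l hl hl₀, hs m hm (hl₀.trans hlm)]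
  have hcolour : ∀ l ∈ X, ∀ m ∈ X, y₀ < l → l < m → c l m = e := fun l hl m hm hl₀ hlm =>
    eq_of_mul_eq_self_of_leR he hee (habsorb l hl m hm hl₀ hlm) (hRs l hl m hm hlm).1
  obtain ⟨l, hl, hl₀⟩ := hX.exists_gt y₀
  obtain ⟨m, hm, hlm⟩ := hX.exists_gt l
  have hlm_eq := hcolour l hl m hm hl₀ hlm
  refine ⟨e, hee, ⟨hlm_eq ▸ hRs l hl m hm hlm, leL_of_mem_closure_singleton he,
    Or.inr ⟨s, ?_⟩⟩, ?_⟩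
  · rw [← hlm_eq, habsorb l hl m hm hl₀ hlm]
  · rintro x ⟨hx, hxy₀⟩ y ⟨hy, -⟩ hxy
    exact hcolour x hx y hy (lt_of_le_of_ne (hmin x hx) (Ne.symm hxy₀)) hxy

/-- if X is infinite with minimum y₀, c(y₀,x) = s for all x ∈ X above y₀,
and all c-values on pairs from X are R-equivalent to s, then X \ {y₀} is c-homogeneous
with colour the idempotent of the H-class of s. -/
theorem homogeneous_from_Rclass (S : Type*) [Semigroup S] [Fintype S]
    (c : ℕ → ℕ → S)
    (hadd : ∀ x y z : ℕ, x < y → y < z → c x z = c x y * c y z)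
    (X : Set ℕ) (hX : X.Infinite) (y₀ : ℕ) (hy₀ : y₀ ∈ X)
    (hmin : ∀ x ∈ X, y₀ ≤ x)
    (s : S) (hs : ∀ x ∈ X, y₀ < x → c y₀ x = s)
    (hRs : ∀ x ∈ X, ∀ y ∈ X, x < y → eqR (c x y) s) :
    ∃ e : S, e * e = e ∧ eqH e s ∧
      ∀ x ∈ X \ {y₀}, ∀ y ∈ X \ {y₀}, x < y → c x y = e :=
  homogeneous_from_Rclass_general S c hadd X hX y₀ hmin s hs hRs
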